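/- arXiv:2210.16408 — 2 statements merged into one kernel-verified Lean document; each statement's English description precedes it below -/
import Mathlib

section
/- Let products be indexed by positions 1,…,n with independent effective values W̃_j = u_j + M_j, M_j i.i.d. continuous, and outside option value W̃₀. A consumer discovers positions sequentially, stopping at the first h with max(W̃₀, W̃₁, …, W̃_h) ≥ z^d(h) where z^d is weakly decreasing, and buys the maximizing alternative. Then swapping two adjacent products A (position h) and B (position h+1) with u_A < u_B weakly increases the probability that some product (not the outside option) is purchased. -/
open MeasureTheory

/-- Value of the product displayed at (0-indexed) position `j` under ranking `r`
(a permutation mapping positions to products), with utility `u` and noise `M`. -/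
noncomputable def posVal {Ω : Type*} (n : ℕ) (u : Fin n → ℝ) (M : Fin n → Ω → ℝ)
    (r : Equiv.Perm (Fin n)) (j : ℕ) (ω : Ω) : ℝ :=
  if h : j < n then u (r ⟨j, h⟩) + M (r ⟨j, h⟩) ω else 0

/-- Running maximum of the outside option value `W0` and the values of the first `h`
discovered products. -/
noncomputable def runMax {Ω : Type*} (W0 : Ω → ℝ) (v : ℕ → Ω → ℝ) (h : ℕ) (ω : Ω) : ℝ :=
  (Finset.range (h + 1)).sup' (Finset.nonempty_range_iff.mpr (Nat.succ_ne_zero h))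
    (fun j => if j = 0 then W0 ω else v (j - 1) ω)

/-- Stopping position: the first `h` at which the running maximum reaches the (weakly
decreasing) discovery value `zd h`, capped at `n`. -/
noncomputable def stopPos {Ω : Type*} (n : ℕ) (zd : ℕ → ℝ) (W0 : Ω → ℝ)
    (v : ℕ → Ω → ℝ) (ω : Ω) : ℕ :=
  sInf {h : ℕ | zd h ≤ runMax W0 v h ω ∨ h = n}

/-- Event that some product (rather than the outside option) is purchased: the best
discovered value strictly exceeds the outside option. -/
def purchaseEvent {Ω : Type*} (n : ℕ) (zd : ℕ → ℝ) (W0 : Ω → ℝ)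
    (v : ℕ → Ω → ℝ) : Set Ω :=
  {ω | W0 ω < runMax W0 v (stopPos n zd W0 v ω) ω}

/-!
Let `σ` exchange the noise terms of `A` and `B`. Since the noise terms are i.i.d. and independent
of `W0`, replacing `M` by `M ∘ σ` preserves the joint law, so the purchase events `E` (original
ranking) and `E'` (swapped ranking) have the same probabilities as the events `Eσ` and `E'σ`
obtained by this replacement. Pointwise, `E ∪ Eσ ⊆ E' ∪ E'σ` and `E ∩ Eσ ⊆ E' ∩ E'σ`, hence
`2 P(E) ≤ 2 P(E')`. Both inclusions compare the running maxima of value sequences that differ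
only at positions `a` and `a + 1`, and `u_A < u_B` makes the value of `A` with either noise term
at most the value of `B` with the same noise term.
-/

section RunningMaximum

variable {Ω : Type*} {W0 : Ω → ℝ} {v v' : ℕ → Ω → ℝ} {ω : Ω}

@[simp]
theorem runMax_zero : runMax W0 v 0 ω = W0 ω := by
  simp [runMax]

theorem runMax_succ (h : ℕ) : runMax W0 v (h + 1) ω = max (runMax W0 v h ω) (v h ω) := by
  rw [runMax, Finset.sup'_congr _ Finset.range_add_one fun _ _ => rfl,
    Finset.sup'_insert (H := Finset.nonempty_range_add_one), sup_comm]
  simp [runMax]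

theorem le_runMax (h : ℕ) : W0 ω ≤ runMax W0 v h ω := by
  induction h with
  | zero => exact runMax_zero.ge
  | succ h ih => exact ih.trans ((runMax_succ h).ge.trans' (le_max_left _ _))

theorem runMax_mono : Monotone fun h => runMax W0 v h ω :=
  monotone_nat_of_le_succ fun h => (runMax_succ h).ge.trans' (le_max_left _ _)

variable {a : ℕ}

theorem runMax_eq_of_le (hoff : ∀ j, j ≠ a → j ≠ a + 1 → v j ω = v' j ω) {h : ℕ} (hh : h ≤ a) :
    runMax W0 v h ω = runMax W0 v' h ω := by
  induction h with
  | zero => simp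
  | succ h ih => rw [runMax_succ, runMax_succ, ih (by omega), hoff h (by omega) (by omega)]

theorem runMax_eq_of_ne (hoff : ∀ j, j ≠ a → j ≠ a + 1 → v j ω = v' j ω)
    (hmax : max (v a ω) (v (a + 1) ω) = max (v' a ω) (v' (a + 1) ω)) {h : ℕ} (hh : h ≠ a + 1) :
    runMax W0 v h ω = runMax W0 v' h ω := by
  induction h with
  | zero => simp
  | succ h ih =>
    rcases lt_trichotomy h (a + 1) with hlt | rfl | hgt
    · exact runMax_eq_of_le hoff (by omega)
    · simp only [runMax_succ, runMax_eq_of_le hoff le_rfl (W0 := W0), max_assoc, hmax]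
    · rw [runMax_succ, runMax_succ, ih (by omega), hoff h (by omega) (by omega)]

theorem runMax_le_runMax (hoff : ∀ j, j ≠ a → j ≠ a + 1 → v j ω = v' j ω)
    (hle : v a ω ≤ v' a ω) (hmax : max (v a ω) (v (a + 1) ω) ≤ max (v' a ω) (v' (a + 1) ω))
    (h : ℕ) : runMax W0 v h ω ≤ runMax W0 v' h ω := by
  induction h with
  | zero => simp
  | succ h ih =>
    rcases lt_trichotomy h (a + 1) with hlt | rfl | hgt
    · rw [runMax_succ, runMax_succ]
      rcases Nat.lt_succ_iff_lt_or_eq.mp hlt with hlt | rfl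
      · rw [hoff h (by omega) (by omega)]
        exact max_le_max ih le_rfl
      · exact max_le_max ih hle
    · simp only [runMax_succ, runMax_eq_of_le hoff le_rfl (W0 := W0), max_assoc]
      exact max_le_max le_rfl hmax
    · rw [runMax_succ, runMax_succ, hoff h (by omega) (by omega)]
      exact max_le_max ih le_rfl

end RunningMaximum

section Stopping

variable {Ω : Type*} {n : ℕ} {zd : ℕ → ℝ} {W0 : Ω → ℝ} {v v' : ℕ → Ω → ℝ} {ω : Ω}

theorem stopPos_le : stopPos n zd W0 v ω ≤ n :=
  Nat.sInf_le (Or.inr rfl)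

theorem stopPos_le_of_le_runMax {h : ℕ} (hh : zd h ≤ runMax W0 v h ω) :
    stopPos n zd W0 v ω ≤ h :=
  Nat.sInf_le (Or.inl hh)

theorem le_runMax_stopPos (hlt : stopPos n zd W0 v ω < n) :
    zd (stopPos n zd W0 v ω) ≤ runMax W0 v (stopPos n zd W0 v ω) ω :=
  (Nat.sInf_mem (s := {h | zd h ≤ runMax W0 v h ω ∨ h = n}) ⟨n, Or.inr rfl⟩).resolve_right
    hlt.ne

theorem runMax_lt_of_lt_stopPos {k : ℕ} (hk : k < stopPos n zd W0 v ω) :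
    runMax W0 v k ω < zd k :=
  lt_of_not_ge fun hle => Nat.notMem_of_lt_sInf hk (Or.inl hle)

theorem stopPos_le_stopPos (hR : ∀ h, runMax W0 v h ω ≤ runMax W0 v' h ω) :
    stopPos n zd W0 v' ω ≤ stopPos n zd W0 v ω := by
  rcases stopPos_le.lt_or_eq with hlt | heq
  · exact stopPos_le_of_le_runMax ((le_runMax_stopPos hlt).trans (hR _))
  · rw [heq]
    exact stopPos_le

theorem mem_purchaseEvent :
    ω ∈ purchaseEvent n zd W0 v ↔ W0 ω < runMax W0 v (stopPos n zd W0 v ω) ω :=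
  Iff.rfl

/-- A larger running maximum stops the search no later; if it stops strictly earlier, it does so
at a position where the original search was still running, so its running maximum there has
reached a discovery value that lies above `W0`. -/
theorem mem_purchaseEvent_of_runMax_le (hR : ∀ h, runMax W0 v h ω ≤ runMax W0 v' h ω)
    (hv : ω ∈ purchaseEvent n zd W0 v) : ω ∈ purchaseEvent n zd W0 v' := by
  rcases (stopPos_le_stopPos (n := n) (zd := zd) hR).lt_or_eq with hlt | heq
  · calc W0 ω ≤ runMax W0 v (stopPos n zd W0 v' ω) ω := le_runMax _
      _ < zd (stopPos n zd W0 v' ω) := runMax_lt_of_lt_stopPos hlt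
      _ ≤ runMax W0 v' (stopPos n zd W0 v' ω) ω :=
        le_runMax_stopPos (hlt.trans_le stopPos_le)
  · rw [mem_purchaseEvent, heq]
    exact hv.trans_le (hR _)

end Stopping

section AdjacentSwap

variable {Ω : Type*} {n : ℕ} {zd : ℕ → ℝ} {W0 : Ω → ℝ} {p q : ℕ → Ω → ℝ} {ω : Ω} {a : ℕ}

def swapAdjacent (a : ℕ) (v : ℕ → Ω → ℝ) : ℕ → Ω → ℝ :=
  fun j => v (Equiv.swap a (a + 1) j)

@[simp]
theorem swapAdjacent_self (v : ℕ → Ω → ℝ) : swapAdjacent a v a = v (a + 1) := by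
  simp [swapAdjacent]

@[simp]
theorem swapAdjacent_add_one (v : ℕ → Ω → ℝ) : swapAdjacent a v (a + 1) = v a := by
  simp [swapAdjacent]

theorem swapAdjacent_of_ne (v : ℕ → Ω → ℝ) {j : ℕ} (h₁ : j ≠ a) (h₂ : j ≠ a + 1) :
    swapAdjacent a v j = v j := by
  simp [swapAdjacent, Equiv.swap_apply_of_ne_of_ne h₁ h₂]

theorem mem_purchaseEvent_swapAdjacent_of_le (hoff : ∀ j, j ≠ a → j ≠ a + 1 → p j ω = q j ω)
    (hle : p a ω ≤ q (a + 1) ω) (hmax : max (p a ω) (p (a + 1) ω) ≤ max (q a ω) (q (a + 1) ω))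
    (hp : ω ∈ purchaseEvent n zd W0 p) : ω ∈ purchaseEvent n zd W0 (swapAdjacent a q) := by
  refine mem_purchaseEvent_of_runMax_le (runMax_le_runMax (a := a) ?_ ?_ ?_) hp
  · intro j h₁ h₂
    rw [hoff j h₁ h₂, swapAdjacent_of_ne q h₁ h₂]
  · simpa using hle
  · simpa [max_comm] using hmax

/-- Moving the larger of two adjacent values later loses the purchase only if the search then
stops right after the smaller one with nothing above `W0`; a sequence `p` agreeing elsewhere
whose value at `a` is at most that smaller value stops there as well, without a purchase. -/
theorem mem_purchaseEvent_swapAdjacent_of_ge (han : a + 1 < n)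
    (hoff : ∀ j, j ≠ a → j ≠ a + 1 → p j ω = q j ω) (hdesc : q (a + 1) ω ≤ q a ω)
    (hpq : p a ω ≤ q (a + 1) ω) (hp : ω ∈ purchaseEvent n zd W0 p)
    (hq : ω ∈ purchaseEvent n zd W0 q) : ω ∈ purchaseEvent n zd W0 (swapAdjacent a q) := by
  set w := swapAdjacent a q
  have hwq : ∀ j, j ≠ a → j ≠ a + 1 → w j ω = q j ω := fun _ h₁ h₂ =>
    congrFun (swapAdjacent_of_ne q h₁ h₂) ω
  have hmax : max (w a ω) (w (a + 1) ω) = max (q a ω) (q (a + 1) ω) := by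
    simp [w, max_comm]
  have hReq : ∀ h, h ≠ a + 1 → runMax W0 w h ω = runMax W0 q h ω :=
    fun h hh => runMax_eq_of_ne hwq hmax hh
  have hτ : stopPos n zd W0 q ω ≤ stopPos n zd W0 w ω :=
    stopPos_le_stopPos (runMax_le_runMax hwq (by simpa [w] using hdesc) hmax.le)
  rcases hτ.lt_or_eq with hlt | heq
  · have hτq : stopPos n zd W0 q ω = a + 1 := by
      by_contra hne
      have hstop := le_runMax_stopPos (hlt.trans_le stopPos_le)
      have hgo := runMax_lt_of_lt_stopPos hlt
      rw [hReq _ hne] at hgo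
      exact hgo.not_ge hstop
    calc W0 ω < runMax W0 q (a + 1) ω := by rw [← hτq]; exact hq
      _ ≤ runMax W0 q (a + 2) ω := runMax_mono (by omega)
      _ = runMax W0 w (a + 2) ω := (hReq _ (by omega)).symm
      _ ≤ runMax W0 w (stopPos n zd W0 w ω) ω := runMax_mono (by omega)
  rcases ne_or_eq (stopPos n zd W0 q ω) (a + 1) with hτq | hτq
  · rw [mem_purchaseEvent, ← heq, hReq _ hτq]
    exact hq
  by_contra hw
  rw [mem_purchaseEvent, not_lt, ← heq, hτq] at hw
  have hpw : runMax W0 p (a + 1) ω ≤ runMax W0 w (a + 1) ω := by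
    rw [runMax_succ, runMax_succ,
      runMax_eq_of_le (fun j h₁ h₂ => (hoff j h₁ h₂).trans (hwq j h₁ h₂).symm) le_rfl]
    exact max_le_max le_rfl (by simpa [w] using hpq)
  have hzd : zd (a + 1) ≤ runMax W0 w (a + 1) ω := by
    rw [← hτq, heq]
    exact le_runMax_stopPos (by omega)
  have hτp : stopPos n zd W0 p ω ≤ a + 1 :=
    stopPos_le_of_le_runMax (hzd.trans (hw.trans (le_runMax _)))
  exact (hp.trans_le ((runMax_mono hτp).trans (hpw.trans hw))).false

theorem mem_purchaseEvent_swapAdjacent_or (hoff : ∀ j, j ≠ a → j ≠ a + 1 → p j ω = q j ω)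
    (hpq : p a ω ≤ q (a + 1) ω) (hp : ω ∈ purchaseEvent n zd W0 p) :
    ω ∈ purchaseEvent n zd W0 (swapAdjacent a p) ∨
      ω ∈ purchaseEvent n zd W0 (swapAdjacent a q) := by
  rcases le_total (p a ω) (p (a + 1) ω) with hasc | hdesc
  · exact .inl (mem_purchaseEvent_swapAdjacent_of_le (fun _ _ _ => rfl) hasc le_rfl hp)
  · refine .inr (mem_purchaseEvent_swapAdjacent_of_le hoff hpq ?_ hp)
    rw [max_eq_left hdesc]
    exact hpq.trans (le_max_right _ _)

theorem mem_purchaseEvent_swapAdjacent_of_mem_of_mem (han : a + 1 < n)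
    (hoff : ∀ j, j ≠ a → j ≠ a + 1 → p j ω = q j ω) (hqp : q a ω ≤ p (a + 1) ω)
    (hp : ω ∈ purchaseEvent n zd W0 p) (hq : ω ∈ purchaseEvent n zd W0 q) :
    ω ∈ purchaseEvent n zd W0 (swapAdjacent a p) := by
  rcases le_total (p a ω) (p (a + 1) ω) with hasc | hdesc
  · exact mem_purchaseEvent_swapAdjacent_of_le (fun _ _ _ => rfl) hasc le_rfl hp
  · exact mem_purchaseEvent_swapAdjacent_of_ge han (fun j h₁ h₂ => (hoff j h₁ h₂).symm) hdesc
      hqp hq hp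

end AdjacentSwap

section PositionValues

variable {Ω : Type*} {n : ℕ} {u : Fin n → ℝ} {M : Fin n → Ω → ℝ}

theorem posVal_val (r : Equiv.Perm (Fin n)) (i : Fin n) (ω : Ω) :
    posVal n u M r i ω = u (r i) + M (r i) ω := by
  simp [posVal]

theorem posVal_swap_trans (r : Equiv.Perm (Fin n)) {a b : Fin n} (hab : (a : ℕ) + 1 = b) :
    posVal n u M ((Equiv.swap a b).trans r) = swapAdjacent a (posVal n u M r) := by
  funext j ω
  rcases lt_or_ge j n with hj | hj
  · obtain ⟨i, rfl⟩ : ∃ i : Fin n, (i : ℕ) = j := ⟨⟨j, hj⟩, rfl⟩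
    rw [swapAdjacent, hab, Fin.val_injective.swap_apply, posVal_val, posVal_val,
      Equiv.trans_apply]
  · have hja : j ≠ a := by omega
    have hjb : j ≠ a + 1 := by omega
    simp [swapAdjacent, Equiv.swap_apply_of_ne_of_ne hja hjb, posVal, not_lt.mpr hj]

theorem posVal_comp_swap_of_ne (r : Equiv.Perm (Fin n)) (a b : Fin n) {j : ℕ} (hja : j ≠ a)
    (hjb : j ≠ b) :
    posVal n u (fun i => M (Equiv.swap (r a) (r b) i)) r j = posVal n u M r j := by
  funext ω
  by_cases hj : j < n
  · have ha : r ⟨j, hj⟩ ≠ r a := r.injective.ne fun h => hja (congrArg Fin.val h)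
    have hb : r ⟨j, hj⟩ ≠ r b := r.injective.ne fun h => hjb (congrArg Fin.val h)
    simp only [posVal, dif_pos hj, Equiv.swap_apply_of_ne_of_ne ha hb]
  · simp only [posVal, dif_neg hj]

end PositionValues

section Measurability

variable {Ω : Type*} [MeasurableSpace Ω] {n : ℕ} {zd : ℕ → ℝ} {W0 : Ω → ℝ} {v : ℕ → Ω → ℝ}

theorem measurable_runMax (hW0 : Measurable W0) (hv : ∀ j, Measurable (v j)) (h : ℕ) :
    Measurable (runMax W0 v h) := by
  induction h with
  | zero => rwa [show runMax W0 v 0 = W0 from funext fun _ => runMax_zero]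
  | succ h ih =>
    rw [show runMax W0 v (h + 1) = fun ω => max (runMax W0 v h ω) (v h ω) from
      funext fun _ => runMax_succ h]
    exact ih.max (hv h)

theorem measurable_stopPos (hW0 : Measurable W0) (hv : ∀ j, Measurable (v j)) :
    Measurable (stopPos n zd W0 v) := by
  have hfind : stopPos n zd W0 v = fun ω =>
      Nat.find (⟨n, .inr rfl⟩ : ∃ h, zd h ≤ runMax W0 v h ω ∨ h = n) :=
    funext fun _ => (Nat.sInf_def ⟨n, .inr rfl⟩).trans (by congr)
  rw [hfind]
  exact measurable_find _ fun k =>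
    (measurableSet_le measurable_const (measurable_runMax hW0 hv k)).union (.const _)

theorem measurableSet_purchaseEvent (hW0 : Measurable W0) (hv : ∀ j, Measurable (v j)) :
    MeasurableSet (purchaseEvent n zd W0 v) := by
  have hR : Measurable fun x : Ω × ℕ => runMax W0 v x.2 x.1 :=
    measurable_from_prod_countable_left (measurable_runMax hW0 hv)
  exact measurableSet_lt hW0 (hR.comp (measurable_id.prodMk (measurable_stopPos hW0 hv)))

theorem measurable_posVal {u : Fin n → ℝ} {M : Fin n → Ω → ℝ} (hM : ∀ i, Measurable (M i))
    (r : Equiv.Perm (Fin n)) (j : ℕ) : Measurable (posVal n u M r j) := by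
  unfold posVal
  split
  · exact measurable_const.add (hM _)
  · exact measurable_const

end Measurability

section Law

variable {Ω : Type*}

theorem purchaseEvent_posVal_eq_preimage {n : ℕ} (zd : ℕ → ℝ) (W0 : Ω → ℝ) (u : Fin n → ℝ)
    (M : Fin n → Ω → ℝ) (r : Equiv.Perm (Fin n)) :
    purchaseEvent n zd W0 (posVal n u M r) =
      (fun ω k => (Fin.cons W0 M : Fin (n + 1) → Ω → ℝ) k ω) ⁻¹'
        purchaseEvent n zd (fun x => x 0) (posVal n u (fun i x => x i.succ) r) :=
  rfl

open ProbabilityTheory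

variable [MeasurableSpace Ω] {μ : Measure Ω}

theorem identDistrib_comp_perm {ι β : Type*} [Fintype ι] [MeasurableSpace β] {X : ι → Ω → β}
    (hX : ∀ i, Measurable (X i)) (hind : iIndepFun X μ) (e : Equiv.Perm ι)
    (he : ∀ i, μ.map (X (e i)) = μ.map (X i)) :
    IdentDistrib (fun ω i => X (e i) ω) (fun ω i => X i ω) μ μ where
  aemeasurable_fst := (measurable_pi_lambda _ fun i => hX (e i)).aemeasurable
  aemeasurable_snd := (measurable_pi_lambda _ hX).aemeasurable
  map_eq := by
    rw [(hind.precomp e.injective).map_fun_eq_pi_map fun i => (hX (e i)).aemeasurable,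
      hind.map_fun_eq_pi_map fun i => (hX i).aemeasurable, funext he]

theorem measure_purchaseEvent_comp_perm {n : ℕ} {zd : ℕ → ℝ} {W0 : Ω → ℝ} {u : Fin n → ℝ}
    {M : Fin n → Ω → ℝ} (hW0 : Measurable W0) (hM : ∀ i, Measurable (M i))
    (hindep : iIndepFun (Fin.cons W0 M : Fin (n + 1) → Ω → ℝ) μ)
    (hid : ∀ i j : Fin n, μ.map (M i) = μ.map (M j)) (σ : Equiv.Perm (Fin n))
    (r : Equiv.Perm (Fin n)) :
    μ (purchaseEvent n zd W0 (posVal n u (fun i => M (σ i)) r)) =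
      μ (purchaseEvent n zd W0 (posVal n u M r)) := by
  set X : Fin (n + 1) → Ω → ℝ := Fin.cons W0 M
  set e : Equiv.Perm (Fin (n + 1)) := Equiv.Perm.decomposeFin.symm (0, σ)
  have hXe : (Fin.cons W0 (fun i => M (σ i)) : Fin (n + 1) → Ω → ℝ) = fun k => X (e k) := by
    funext k
    cases k using Fin.cases <;> simp [X, e]
  have hX : ∀ k, Measurable (X k) := fun k => Fin.cases hW0 hM k
  have he : ∀ k, μ.map (X (e k)) = μ.map (X k) := fun k =>
    Fin.cases (by simp [X, e]) (fun i => by simpa [X, e] using hid (σ i) i) k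
  have hS : MeasurableSet (purchaseEvent n zd (fun x : Fin (n + 1) → ℝ => x 0)
      (posVal n u (fun i x => x i.succ) r)) :=
    measurableSet_purchaseEvent (measurable_pi_apply 0)
      (measurable_posVal (fun i => measurable_pi_apply i.succ) r)
  rw [purchaseEvent_posVal_eq_preimage, purchaseEvent_posVal_eq_preimage, hXe]
  exact (identDistrib_comp_perm hX hindep e he).measure_mem_eq hS

end Law

theorem measure_le_of_union_subset_of_inter_subset {α : Type*} [MeasurableSpace α]
    {μ : Measure α} {s s' t t' : Set α} (hs' : MeasurableSet s') (ht' : MeasurableSet t')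
    (hss' : μ s' = μ s) (htt' : μ t' = μ t) (hunion : s ∪ s' ⊆ t ∪ t')
    (hinter : s ∩ s' ⊆ t ∩ t') : μ s ≤ μ t := by
  have h2 : 2 * μ s ≤ 2 * μ t :=
    calc 2 * μ s = μ (s ∪ s') + μ (s ∩ s') := by rw [measure_union_add_inter s hs', hss', two_mul]
      _ ≤ μ (t ∪ t') + μ (t ∩ t') := add_le_add (measure_mono hunion) (measure_mono hinter)
      _ = 2 * μ t := by rw [measure_union_add_inter t ht', htt', two_mul]
  exact (ENNReal.mul_le_mul_iff_right two_ne_zero ENNReal.ofNat_ne_top).mp h2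

theorem adjacent_swap_increases_purchase_probability_general
    {Ω : Type*} [MeasurableSpace Ω] (μ : Measure Ω)
    (n : ℕ) (u : Fin n → ℝ) (M : Fin n → Ω → ℝ) (W0 : Ω → ℝ)
    (hW0 : Measurable W0) (hM : ∀ i, Measurable (M i))
    (hindep : ProbabilityTheory.iIndepFun
      (Fin.cons W0 M : Fin (n + 1) → Ω → ℝ) μ)
    (hid : ∀ i j : Fin n, μ.map (M i) = μ.map (M j))
    (zd : ℕ → ℝ)
    (r : Equiv.Perm (Fin n)) (a b : Fin n) (hab : (a : ℕ) + 1 = (b : ℕ))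
    (hu : u (r a) < u (r b)) :
    μ (purchaseEvent n zd W0 (posVal n u M r)) ≤
      μ (purchaseEvent n zd W0 (posVal n u M ((Equiv.swap a b).trans r))) := by
  set σ := Equiv.swap (r a) (r b)
  set p := posVal n u M r
  set q := posVal n u (fun i => M (σ i)) r
  have han : (a : ℕ) + 1 < n := hab ▸ b.isLt
  have hoff : ∀ ω (j : ℕ), j ≠ a → j ≠ (a : ℕ) + 1 → p j ω = q j ω := fun ω j h₁ h₂ =>
    congrFun (posVal_comp_swap_of_ne r a b h₁ (hab ▸ h₂)).symm ω
  have hpq : ∀ ω, p a ω ≤ q (a + 1) ω := fun ω => by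
    simp only [p, q, σ, hab, posVal_val, Equiv.swap_apply_right]
    linarith
  have hqp : ∀ ω, q a ω ≤ p (a + 1) ω := fun ω => by
    simp only [p, q, σ, hab, posVal_val, Equiv.swap_apply_left]
    linarith
  refine measure_le_of_union_subset_of_inter_subset
    (measurableSet_purchaseEvent hW0 (measurable_posVal (fun i => hM (σ i)) r))
    (measurableSet_purchaseEvent hW0 (measurable_posVal (fun i => hM (σ i)) _))
    (measure_purchaseEvent_comp_perm hW0 hM hindep hid σ r)
    (measure_purchaseEvent_comp_perm hW0 hM hindep hid σ _) ?_ ?_ <;>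
    rw [posVal_swap_trans r hab, posVal_swap_trans r hab]
  · rintro ω (hp | hq)
    · exact mem_purchaseEvent_swapAdjacent_or (hoff ω) (hpq ω) hp
    · exact (mem_purchaseEvent_swapAdjacent_or (fun j h₁ h₂ => (hoff ω j h₁ h₂).symm)
        (hqp ω) hq).symm
  · rintro ω ⟨hp, hq⟩
    exact ⟨mem_purchaseEvent_swapAdjacent_of_mem_of_mem han (hoff ω) (hqp ω) hp hq,
      mem_purchaseEvent_swapAdjacent_of_mem_of_mem han (fun j h₁ h₂ => (hoff ω j h₁ h₂).symm)
        (hpq ω) hq hp⟩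

/-- In the sequential discovery model with i.i.d. continuous noise, weakly
decreasing discovery values and independent outside option, swapping two adjacent
products `A` (position `a`) and `B` (position `a+1`) with `u_A < u_B` weakly increases
the overall purchase probability. -/
theorem adjacent_swap_increases_purchase_probability
    {Ω : Type*} [MeasurableSpace Ω] (μ : Measure Ω) [IsProbabilityMeasure μ]
    (n : ℕ) (u : Fin n → ℝ) (M : Fin n → Ω → ℝ) (W0 : Ω → ℝ)
    (hW0 : Measurable W0) (hM : ∀ i, Measurable (M i))
    (hindep : ProbabilityTheory.iIndepFun
      (Fin.cons W0 M : Fin (n + 1) → Ω → ℝ) μ)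
    (hid : ∀ i j : Fin n, μ.map (M i) = μ.map (M j))
    (hcont : ∀ (i : Fin n) (t : ℝ), μ {ω | M i ω = t} = 0)
    (zd : ℕ → ℝ) (hzd : Antitone zd)
    (r : Equiv.Perm (Fin n)) (a b : Fin n) (hab : (a : ℕ) + 1 = (b : ℕ))
    (hu : u (r a) < u (r b)) :
    μ (purchaseEvent n zd W0 (posVal n u M r)) ≤
      μ (purchaseEvent n zd W0 (posVal n u M ((Equiv.swap a b).trans r))) :=
  adjacent_swap_increases_purchase_probability_general μ n u M W0 hW0 hM hindep hid zd r a b hab hu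
end

section
/- A ranking that orders products in decreasing order of expected utility u_j^e maximizes the overall purchase probability: for any ranking r of n products, the purchase probability under the decreasing-u^e ranking is at least that under r. (It suffices to show any ranking violating the order admits an adjacent swap that weakly increases purchase probability, and that the number of rankings is finite.) -/
open MeasureTheory

/-!
Before any product beats the outside option `W0`, the running maximum equals `W0`; hence a
purchase happens iff one of the products shown before the deterministic cutoff
`T(W0) = min {h | zd h ≤ W0 ∨ h = n}` beats `W0`. Conditionally on `W0 = w`, independence makes
the no-purchase probability the product of `P(M_i ≤ w - u_i)` over the products shown at the
first `T(w)` positions. As the `M_i` are identically distributed, these factors grow as `u_i`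
decreases, so ranking by decreasing `u` minimizes that product for every `w`.
-/

open ProbabilityTheory Finset

/-- The stopping position when the running maximum never rises above the outside option `w`. -/
noncomputable def outsideStopPos (n : ℕ) (zd : ℕ → ℝ) (w : ℝ) : ℕ :=
  sInf {h : ℕ | zd h ≤ w ∨ h = n}

lemma outsideStopPos_mem (n : ℕ) (zd : ℕ → ℝ) (w : ℝ) :
    zd (outsideStopPos n zd w) ≤ w ∨ outsideStopPos n zd w = n :=
  Nat.sInf_mem (s := {h : ℕ | zd h ≤ w ∨ h = n}) ⟨n, Or.inr rfl⟩

lemma outsideStopPos_le (n : ℕ) (zd : ℕ → ℝ) (w : ℝ) : outsideStopPos n zd w ≤ n :=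
  Nat.sInf_le (Or.inr rfl)

lemma measurable_outsideStopPos (n : ℕ) (zd : ℕ → ℝ) : Measurable (outsideStopPos n zd) := by
  classical
  have hex : ∀ w, ∃ h, zd h ≤ w ∨ h = n := fun _ => ⟨n, Or.inr rfl⟩
  have hfind : outsideStopPos n zd = fun w => Nat.find (hex w) := funext fun w =>
    le_antisymm (Nat.sInf_le (Nat.find_spec (hex w))) (Nat.find_min' _ (outsideStopPos_mem n zd w))
  rw [hfind]
  exact measurable_find hex fun k => measurableSet_Ici.union (.const _)

lemma stopPos_mem {Ω : Type*} (n : ℕ) (zd : ℕ → ℝ) (W0 : Ω → ℝ) (v : ℕ → Ω → ℝ) (ω : Ω) :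
    zd (stopPos n zd W0 v ω) ≤ runMax W0 v (stopPos n zd W0 v ω) ω ∨ stopPos n zd W0 v ω = n :=
  Nat.sInf_mem (s := {h : ℕ | zd h ≤ runMax W0 v h ω ∨ h = n}) ⟨n, Or.inr rfl⟩

section runMax

variable {Ω : Type*} {W0 : Ω → ℝ} {v : ℕ → Ω → ℝ} {h : ℕ} {ω : Ω}

lemma self_le_runMax : W0 ω ≤ runMax W0 v h ω :=
  le_sup'_of_le _ (mem_range.2 h.succ_pos) (by simp)

lemma lt_runMax_iff : W0 ω < runMax W0 v h ω ↔ ∃ j < h, W0 ω < v j ω := by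
  rw [runMax, lt_sup'_iff]
  constructor
  · rintro ⟨_ | j, hj, hlt⟩
    · simp at hlt
    · exact ⟨j, by simpa using hj, by simpa using hlt⟩
  · rintro ⟨j, hj, hlt⟩
    exact ⟨j + 1, by simpa using hj, by simpa using hlt⟩

lemma runMax_eq_self (hle : ∀ j < h, v j ω ≤ W0 ω) : runMax W0 v h ω = W0 ω :=
  le_antisymm (not_lt.1 fun hlt => by
    obtain ⟨j, hj, hlt⟩ := lt_runMax_iff.1 hlt
    exact (hle j hj).not_gt hlt) self_le_runMax

end runMax

lemma mem_purchaseEvent_iff {Ω : Type*} {n : ℕ} {zd : ℕ → ℝ} {W0 : Ω → ℝ} {v : ℕ → Ω → ℝ}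
    {ω : Ω} : ω ∈ purchaseEvent n zd W0 v ↔ ∃ j < outsideStopPos n zd (W0 ω), W0 ω < v j ω := by
  simp only [purchaseEvent, Set.mem_ofPred_eq, lt_runMax_iff]
  constructor
  · rintro ⟨j, hjS, hj⟩
    by_contra! hT
    have hS : stopPos n zd W0 v ω ≤ outsideStopPos n zd (W0 ω) := Nat.sInf_le <| by
      rw [Set.mem_ofPred_eq, runMax_eq_self hT]
      exact outsideStopPos_mem n zd (W0 ω)
    exact (hT j (hjS.trans_le hS)).not_gt hj
  · rintro ⟨j, hjT, hj⟩
    by_contra! hS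
    have hT : outsideStopPos n zd (W0 ω) ≤ stopPos n zd W0 v ω := Nat.sInf_le <| by
      have h := stopPos_mem n zd W0 v ω
      rwa [runMax_eq_self hS] at h
    exact (hS j (hjT.trans_le hT)).not_gt hj

section ProductComparison

variable {ι N : Type*} [CommMonoid N] [LinearOrder N] [MulLeftMono N] {a : ι → N}

lemma prod_le_prod_of_card_eq_of_forall_le {C D : Finset ι} (hcard : #C = #D)
    (h : ∀ i ∈ C, ∀ j ∈ D, a i ≤ a j) : ∏ i ∈ C, a i ≤ ∏ j ∈ D, a j := by
  obtain rfl | hD := D.eq_empty_or_nonempty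
  · rw [card_empty, card_eq_zero] at hcard
    simp [hcard]
  obtain ⟨j₀, hj₀, hmin⟩ := D.exists_min_image a hD
  calc ∏ i ∈ C, a i ≤ a j₀ ^ #C := prod_le_pow_card _ _ _ fun i hi => h i hi j₀ hj₀
    _ = a j₀ ^ #D := by rw [hcard]
    _ ≤ ∏ j ∈ D, a j := pow_card_le_prod _ _ _ hmin

lemma prod_le_prod_of_card_eq_of_forall_mem_notMem [DecidableEq ι] {A B : Finset ι}
    (hcard : #A = #B) (h : ∀ i ∈ A, ∀ j ∉ A, a i ≤ a j) : ∏ i ∈ A, a i ≤ ∏ j ∈ B, a j := by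
  rw [← prod_inter_mul_prod_sdiff A B, ← prod_inter_mul_prod_sdiff B A, inter_comm B A]
  exact mul_le_mul_right (prod_le_prod_of_card_eq_of_forall_le (card_sdiff_comm hcard)
    fun i hi j hj => h i (mem_sdiff.1 hi).1 j (mem_sdiff.1 hj).2) _

end ProductComparison

section Ranking

variable {n : ℕ}

def topProducts (ρ : Equiv.Perm (Fin n)) (t : ℕ) : Finset (Fin n) :=
  (univ.filter fun p : Fin n => (p : ℕ) < t).map ρ.toEmbedding

lemma mem_topProducts {ρ : Equiv.Perm (Fin n)} {t : ℕ} {i : Fin n} :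
    i ∈ topProducts ρ t ↔ (ρ.symm i : ℕ) < t := by
  simp [topProducts, mem_map_equiv]

lemma card_topProducts (ρ σ : Equiv.Perm (Fin n)) (t : ℕ) :
    #(topProducts ρ t) = #(topProducts σ t) := by
  simp only [topProducts, card_map]

lemma prod_topProducts_le {N : Type*} [CommMonoid N] [LinearOrder N] [MulLeftMono N]
    {a : Fin n → N} {σ : Equiv.Perm (Fin n)} (hσ : ∀ p q : Fin n, p ≤ q → a (σ p) ≤ a (σ q))
    (ρ : Equiv.Perm (Fin n)) (t : ℕ) :
    ∏ i ∈ topProducts σ t, a i ≤ ∏ i ∈ topProducts ρ t, a i := by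
  refine prod_le_prod_of_card_eq_of_forall_mem_notMem (card_topProducts σ ρ t) fun i hi j hj => ?_
  rw [mem_topProducts] at hi hj
  simpa using hσ (σ.symm i) (σ.symm j) (Fin.le_iff_val_le_val.2 (by omega))

lemma purchaseEvent_posVal_eq_compl {Ω : Type*} (u : Fin n → ℝ) (M : Fin n → Ω → ℝ)
    (W0 : Ω → ℝ) (zd : ℕ → ℝ) (ρ : Equiv.Perm (Fin n)) :
    purchaseEvent n zd W0 (posVal n u M ρ) =
      {ω | ∀ i ∈ topProducts ρ (outsideStopPos n zd (W0 ω)), M i ω ∈ Set.Iic (W0 ω - u i)}ᶜ := by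
  ext ω
  simp only [Set.mem_compl_iff, Set.mem_ofPred_eq, mem_purchaseEvent_iff, not_forall,
    mem_topProducts, Set.mem_Iic, not_le, exists_prop, sub_lt_iff_lt_add']
  constructor
  · rintro ⟨j, hjT, hj⟩
    have hjn : j < n := hjT.trans_le (outsideStopPos_le n zd (W0 ω))
    refine ⟨ρ ⟨j, hjn⟩, by simpa using hjT, ?_⟩
    simpa [posVal, hjn] using hj
  · rintro ⟨i, hiT, hi⟩
    exact ⟨ρ.symm i, hiT, by simpa [posVal] using hi⟩

lemma measurableSet_mem_topProducts_outsideStopPos (zd : ℕ → ℝ)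
    (ρ : Equiv.Perm (Fin n)) (i : Fin n) :
    MeasurableSet {w | i ∈ topProducts ρ (outsideStopPos n zd w)} := by
  simp only [mem_topProducts]
  exact measurable_outsideStopPos n zd (measurableSet_Ioi (a := ((ρ.symm i : Fin n) : ℕ)))

end Ranking

section Independence

variable {Ω β : Type*} [MeasurableSpace Ω] [MeasurableSpace β] {μ : Measure Ω} {n : ℕ}
  {W0 : Ω → β} {M : Fin n → Ω → β}

lemma map_prodMk_eq_prod_pi_of_iIndepFun_cons (hW0 : Measurable W0) (hM : ∀ i, Measurable (M i))
    (hindep : iIndepFun (Fin.cons W0 M : Fin (n + 1) → Ω → β) μ) :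
    μ.map (fun ω => (W0 ω, fun i => M i ω)) =
      (μ.map W0).prod (Measure.pi fun i => μ.map (M i)) := by
  set f : Fin (n + 1) → Ω → β := Fin.cons W0 M
  have := hindep.isProbabilityMeasure
  have hmeas : ∀ i, Measurable (f i) := Fin.cases hW0 hM
  have hsplit : (fun ω => (W0 ω, fun i => M i ω)) =
      MeasurableEquiv.piFinSuccAbove (fun _ => β) 0 ∘ fun ω i => f i ω := by
    ext ω <;> simp [f, MeasurableEquiv.piFinSuccAbove, Fin.tail]
  rw [hsplit, ← Measure.map_map (MeasurableEquiv.measurable _) (measurable_pi_lambda _ hmeas),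
    hindep.map_fun_eq_pi_map fun i => (hmeas i).aemeasurable,
    (measurePreserving_piFinSuccAbove (fun i => μ.map (f i)) 0).map_eq]
  simp [f]

lemma measurableSet_setOf_forall_mem {S : β → Finset (Fin n)} {A : Fin n → β → Set β}
    (hS : ∀ i, MeasurableSet {w | i ∈ S w})
    (hA : ∀ i, MeasurableSet {p : β × β | p.2 ∈ A i p.1}) :
    MeasurableSet {p : β × (Fin n → β) | ∀ i ∈ S p.1, p.2 i ∈ A i p.1} := by
  simp only [Set.ofPred_forall]
  exact .iInter fun i => ((hS i).preimage measurable_fst).imp <|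
    (hA i).preimage (f := fun p : β × (Fin n → β) => (p.1, p.2 i)) <| by fun_prop

lemma measurableSet_setOf_forall_mem_apply (hW0 : Measurable W0) (hM : ∀ i, Measurable (M i))
    {S : β → Finset (Fin n)} {A : Fin n → β → Set β} (hS : ∀ i, MeasurableSet {w | i ∈ S w})
    (hA : ∀ i, MeasurableSet {p : β × β | p.2 ∈ A i p.1}) :
    MeasurableSet {ω | ∀ i ∈ S (W0 ω), M i ω ∈ A i (W0 ω)} :=
  hW0.prodMk (measurable_pi_lambda _ hM) (measurableSet_setOf_forall_mem hS hA)

lemma measure_setOf_forall_mem_eq_lintegral (hW0 : Measurable W0) (hM : ∀ i, Measurable (M i))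
    (hindep : iIndepFun (Fin.cons W0 M : Fin (n + 1) → Ω → β) μ)
    {S : β → Finset (Fin n)} {A : Fin n → β → Set β} (hS : ∀ i, MeasurableSet {w | i ∈ S w})
    (hA : ∀ i, MeasurableSet {p : β × β | p.2 ∈ A i p.1}) :
    μ {ω | ∀ i ∈ S (W0 ω), M i ω ∈ A i (W0 ω)} =
      ∫⁻ w, ∏ i ∈ S w, μ.map (M i) (A i w) ∂μ.map W0 := by
  have := hindep.isProbabilityMeasure
  have := fun i => Measure.isProbabilityMeasure_map (μ := μ) (hM i).aemeasurable
  set E := {p : β × (Fin n → β) | ∀ i ∈ S p.1, p.2 i ∈ A i p.1}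
  have hE : MeasurableSet E := measurableSet_setOf_forall_mem hS hA
  change μ ((fun ω => (W0 ω, fun i => M i ω)) ⁻¹' E) = _
  rw [← Measure.map_apply (hW0.prodMk (measurable_pi_lambda _ hM)) hE,
    map_prodMk_eq_prod_pi_of_iIndepFun_cons hW0 hM hindep, Measure.prod_apply hE]
  refine lintegral_congr fun w => ?_
  have hsec : Prod.mk w ⁻¹' E =
      Set.univ.pi fun i => if i ∈ S w then A i w else Set.univ := by
    ext x
    simp only [Set.mem_preimage, Set.mem_pi, Set.mem_univ, true_imp_iff]
    exact forall_congr' fun i => by split_ifs <;> simp [*]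
  rw [hsec, Measure.pi_pi]
  simp only [apply_ite, measure_univ, prod_ite_mem, univ_inter]

end Independence

theorem utility_ranking_maximizes_purchase_probability_general
    {Ω : Type*} [MeasurableSpace Ω] (μ : Measure Ω) [IsProbabilityMeasure μ]
    (n : ℕ) (u : Fin n → ℝ) (M : Fin n → Ω → ℝ) (W0 : Ω → ℝ)
    (hW0 : Measurable W0) (hM : ∀ i, Measurable (M i))
    (hindep : ProbabilityTheory.iIndepFun
      (Fin.cons W0 M : Fin (n + 1) → Ω → ℝ) μ)
    (hid : ∀ i j : Fin n, μ.map (M i) = μ.map (M j))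
    (zd : ℕ → ℝ)
    (rStar : Equiv.Perm (Fin n))
    (hstar : ∀ p q : Fin n, p ≤ q → u (rStar q) ≤ u (rStar p))
    (r : Equiv.Perm (Fin n)) :
    μ (purchaseEvent n zd W0 (posVal n u M r)) ≤
      μ (purchaseEvent n zd W0 (posVal n u M rStar)) := by
  have hS := measurableSet_mem_topProducts_outsideStopPos (n := n) zd
  have hA (i : Fin n) : MeasurableSet {p : ℝ × ℝ | p.2 ∈ Set.Iic (p.1 - u i)} :=
    measurableSet_le measurable_snd (measurable_fst.sub_const _)
  have hNoPurchase_meas (ρ : Equiv.Perm (Fin n)) :=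
    measurableSet_setOf_forall_mem_apply hW0 hM (hS ρ) (A := fun i w => Set.Iic (w - u i)) hA
  have hNoPurchase (ρ : Equiv.Perm (Fin n)) := measure_setOf_forall_mem_eq_lintegral hW0 hM
    hindep (hS ρ) (A := fun i w => Set.Iic (w - u i)) hA
  have hfallShort (w : ℝ) (p q : Fin n) (hpq : p ≤ q) :
      μ.map (M (rStar p)) (Set.Iic (w - u (rStar p))) ≤
        μ.map (M (rStar q)) (Set.Iic (w - u (rStar q))) := by
    rw [hid (rStar p) (rStar q)]
    exact measure_mono (Set.Iic_subset_Iic.2 (by linarith [hstar p q hpq]))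
  rw [purchaseEvent_posVal_eq_compl, purchaseEvent_posVal_eq_compl,
    prob_compl_eq_one_sub (hNoPurchase_meas r), prob_compl_eq_one_sub (hNoPurchase_meas rStar),
    hNoPurchase, hNoPurchase]
  exact tsub_le_tsub_left (lintegral_mono fun w =>
    prod_topProducts_le (a := fun i => μ.map (M i) (Set.Iic (w - u i))) (hfallShort w) r _) 1

/-- A ranking ordering products in decreasing order of expected utility
maximizes the overall purchase probability: for any ranking `r`, the purchase
probability under a decreasing-`u` ranking `rStar` is at least that under `r`. -/
theorem utility_ranking_maximizes_purchase_probability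
    {Ω : Type*} [MeasurableSpace Ω] (μ : Measure Ω) [IsProbabilityMeasure μ]
    (n : ℕ) (u : Fin n → ℝ) (M : Fin n → Ω → ℝ) (W0 : Ω → ℝ)
    (hW0 : Measurable W0) (hM : ∀ i, Measurable (M i))
    (hindep : ProbabilityTheory.iIndepFun
      (Fin.cons W0 M : Fin (n + 1) → Ω → ℝ) μ)
    (hid : ∀ i j : Fin n, μ.map (M i) = μ.map (M j))
    (hcont : ∀ (i : Fin n) (t : ℝ), μ {ω | M i ω = t} = 0)
    (zd : ℕ → ℝ) (hzd : Antitone zd)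
    (rStar : Equiv.Perm (Fin n))
    (hstar : ∀ p q : Fin n, p ≤ q → u (rStar q) ≤ u (rStar p))
    (r : Equiv.Perm (Fin n)) :
    μ (purchaseEvent n zd W0 (posVal n u M r)) ≤
      μ (purchaseEvent n zd W0 (posVal n u M rStar)) :=
  utility_ranking_maximizes_purchase_probability_general μ n u M W0 hW0 hM hindep hid zd rStar hstar
    r
end
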